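/- arXiv:1912.07203 — 2 statements merged into one kernel-verified Lean document; each statement's English description precedes it below -/
import Mathlib

section
/- Let G be a connected simple graph on n ≥ 333 vertices, let ℐ ⊆ V(G) be a fixed set of vertices, and let 0 < p ≤ 1. Then there exists a set ℛ ⊆ ℐ with |ℛ| ≤ 2|ℐ|p such that for every natural number i and every subset A ⊆ V(G) with |B(A,i) ∩ ℐ| ≥ |A|·(log n)²/p, we have |B(A,i) ∩ ℛ| ≥ |A|. -/
/-!
Take `R` to be a random subset of `ℐ` containing each vertex independently with probability `p`,
and put `t = (log n)²`. Markov's inequality for `2 ^ |R|` shows `|R| > 2p|ℐ|` with probability at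
most `(e/4)^{p|ℐ|}`, and for a ball `B` with `|A| t ≤ p |B ∩ ℐ|`, Markov's inequality for
`t ^ (|A| - |B ∩ R|)` shows `|B ∩ R| < |A|` with probability at most `(t e^{1-t})^|A|`. Radii
beyond `n` add no new balls, so summing over the `n + 1` radii and all nonempty `A` bounds the
total failure probability by `(e/4)^{p|ℐ|} + (n + 1)((1 + t e^{1-t})^n - 1) < 1` once
`log n ≥ 8` and `p|ℐ| ≥ t`. When `p|ℐ| < t` only `A = ∅` can satisfy the hypothesis, and
`R = ∅` works.
-/

/-- `graphBall G A i` is the set of vertices of `G` at graph distance at most `i`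
from some vertex of `A`. -/
def graphBall {V : Type*} (G : SimpleGraph V) (A : Set V) (i : ℕ) : Set V :=
  {v | ∃ a ∈ A, G.dist a v ≤ i}

open Finset Real

section RandomSubset

variable {α : Type*}

/-- The probability that a random subset of `s`, containing each element independently with
probability `p`, equals a given `R ⊆ s`. -/
def bernoulliWeight (p : ℝ) (s R : Finset α) : ℝ :=
  p ^ #R * (1 - p) ^ (#s - #R)

lemma bernoulliWeight_nonneg {p : ℝ} (hp0 : 0 ≤ p) (hp1 : p ≤ 1) (s R : Finset α) :
    0 ≤ bernoulliWeight p s R :=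
  mul_nonneg (pow_nonneg hp0 _) (pow_nonneg (sub_nonneg.2 hp1) _)

lemma sum_bernoulliWeight (p : ℝ) (s : Finset α) :
    ∑ R ∈ s.powerset, bernoulliWeight p s R = 1 := by
  simp [bernoulliWeight, sum_pow_mul_eq_add_pow]

lemma sum_bernoulliWeight_mul_pow_card (p r : ℝ) (s : Finset α) :
    ∑ R ∈ s.powerset, bernoulliWeight p s R * r ^ #R = (p * r + (1 - p)) ^ #s := by
  rw [← sum_pow_mul_eq_add_pow]
  refine sum_congr rfl fun R _ => ?_
  rw [bernoulliWeight]
  ring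

lemma sum_bernoulliWeight_mul_pow_card_filter (p r : ℝ) (s : Finset α) (S : Set α)
    [DecidablePred (· ∈ S)] :
    ∑ R ∈ s.powerset, bernoulliWeight p s R * r ^ #{x ∈ R | x ∈ S} =
      (p * r + (1 - p)) ^ #{x ∈ s | x ∈ S} := by
  classical
  calc ∑ R ∈ s.powerset, bernoulliWeight p s R * r ^ #{x ∈ R | x ∈ S}
      = ∑ R ∈ s.powerset, (∏ x ∈ R, p * if x ∈ S then r else 1) * ∏ _x ∈ s \ R, (1 - p) := by
        refine sum_congr rfl fun R hR => ?_
        rw [prod_mul_distrib, ← prod_filter, prod_const, prod_const, prod_const,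
          card_sdiff_of_subset (mem_powerset.1 hR), bernoulliWeight]
        ring
    _ = ∏ x ∈ s, ((p * if x ∈ S then r else 1) + (1 - p)) := (prod_add _ _ s).symm
    _ = ∏ x ∈ s, if x ∈ S then p * r + (1 - p) else 1 :=
        prod_congr rfl fun x _ => by split_ifs <;> ring
    _ = (p * r + (1 - p)) ^ #{x ∈ s | x ∈ S} := by rw [← prod_filter, prod_const]

lemma sum_filter_le_sum_mul {β : Type*} {U : Finset β} {w f : β → ℝ} {E : β → Prop}
    [DecidablePred E] (hw : ∀ b ∈ U, 0 ≤ w b) (hf : ∀ b ∈ U, 0 ≤ f b)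
    (hE : ∀ b ∈ U, E b → 1 ≤ f b) :
    ∑ b ∈ U with E b, w b ≤ ∑ b ∈ U, w b * f b := by
  rw [sum_filter]
  refine sum_le_sum fun b hb => ?_
  split_ifs with h
  · exact le_mul_of_one_le_right (hw b hb) (hE b hb h)
  · exact mul_nonneg (hw b hb) (hf b hb)

lemma exists_mem_forall_not_of_sum_lt_one {β ι : Type*} {U : Finset β} {w : β → ℝ}
    (hw : ∀ b ∈ U, 0 ≤ w b) (hU : ∑ b ∈ U, w b = 1) {J : Finset ι} {E : ι → β → Prop}
    [∀ j, DecidablePred (E j)] (hJ : ∑ j ∈ J, ∑ b ∈ U with E j b, w b < 1) :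
    ∃ b ∈ U, ∀ j ∈ J, ¬E j b := by
  by_contra! hall
  have hcover : ∑ b ∈ U, w b ≤ ∑ j ∈ J, ∑ b ∈ U with E j b, w b := by
    simp_rw [sum_filter]
    rw [sum_comm]
    refine sum_le_sum fun b hb => ?_
    obtain ⟨j, hj, hE⟩ := hall b hb
    calc w b = if E j b then w b else 0 := (if_pos hE).symm
      _ ≤ ∑ j ∈ J, if E j b then w b else 0 :=
        single_le_sum (f := fun j => if E j b then w b else 0)
          (fun j _ => by split_ifs <;> simp [hw b hb]) hj
  linarith

lemma sum_bernoulliWeight_two_mul_lt_card_le {p : ℝ} (hp0 : 0 ≤ p) (hp1 : p ≤ 1) (s : Finset α) :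
    ∑ R ∈ s.powerset with 2 * p * #s < #R, bernoulliWeight p s R ≤
      exp ((1 - 2 * log 2) * (p * #s)) := by
  calc ∑ R ∈ s.powerset with 2 * p * #s < #R, bernoulliWeight p s R
      ≤ ∑ R ∈ s.powerset, bernoulliWeight p s R * (2 ^ #R * exp (-(2 * log 2 * (p * #s)))) := by
        refine sum_filter_le_sum_mul (fun R _ => bernoulliWeight_nonneg hp0 hp1 s R)
          (fun _ _ => by positivity) fun R _ hlarge => ?_
        rw [← exp_log (two_pos (α := ℝ)), ← exp_nat_mul, ← exp_add, exp_log two_pos,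
          one_le_exp_iff]
        nlinarith [log_pos one_lt_two]
    _ = (1 + p) ^ #s * exp (-(2 * log 2 * (p * #s))) := by
        simp_rw [← mul_assoc]
        rw [← sum_mul, sum_bernoulliWeight_mul_pow_card]
        ring_nf
    _ ≤ exp p ^ #s * exp (-(2 * log 2 * (p * #s))) := by
        gcongr
        linarith [add_one_le_exp p]
    _ = exp ((1 - 2 * log 2) * (p * #s)) := by
        rw [← exp_nat_mul, ← exp_add]
        ring_nf

lemma sum_bernoulliWeight_card_filter_lt_le {p t : ℝ} (hp0 : 0 ≤ p) (hp1 : p ≤ 1) (ht : 1 ≤ t)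
    {s : Finset α} {S : Set α} [DecidablePred (· ∈ S)] {k : ℕ}
    (hk : k * t ≤ p * #{x ∈ s | x ∈ S}) :
    ∑ R ∈ s.powerset with #{x ∈ R | x ∈ S} < k, bernoulliWeight p s R ≤
      (t * exp (1 - t)) ^ k := by
  have ht0 : 0 < t := by linarith
  have ht_inv : t⁻¹ ≤ 1 := inv_le_one_of_one_le₀ ht
  calc ∑ R ∈ s.powerset with #{x ∈ R | x ∈ S} < k, bernoulliWeight p s R
      ≤ ∑ R ∈ s.powerset, bernoulliWeight p s R * (t ^ k * t⁻¹ ^ #{x ∈ R | x ∈ S}) := by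
        refine sum_filter_le_sum_mul (fun R _ => bernoulliWeight_nonneg hp0 hp1 s R)
          (fun _ _ => by positivity) fun R _ hsmall => ?_
        rw [inv_pow, ← div_eq_mul_inv, one_le_div (by positivity)]
        exact pow_le_pow_right₀ ht hsmall.le
    _ = t ^ k * (1 - p * (1 - t⁻¹)) ^ #{x ∈ s | x ∈ S} := by
        simp_rw [mul_left_comm _ (t ^ k)]
        rw [← mul_sum, sum_bernoulliWeight_mul_pow_card_filter]
        ring_nf
    _ ≤ t ^ k * exp (-(p * (1 - t⁻¹))) ^ #{x ∈ s | x ∈ S} := by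
        gcongr
        · nlinarith [mul_le_one₀ hp1 (sub_nonneg.2 ht_inv) (by linarith [inv_pos.2 ht0])]
        · linarith [add_one_le_exp (-(p * (1 - t⁻¹)))]
    _ ≤ t ^ k * exp (k * (1 - t)) := by
        rw [← exp_nat_mul]
        gcongr t ^ k * exp ?_
        have hmul := mul_le_mul_of_nonneg_right hk (sub_nonneg.2 ht_inv)
        have hcancel : k * t * (1 - t⁻¹) = k * (t - 1) := by field_simp
        linarith
    _ = (t * exp (1 - t)) ^ k := by rw [mul_pow, ← exp_nat_mul]

theorem exists_subset_card_le_forall_le_card_filter {ι : Type*} (s : Finset α) (J : Finset ι)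
    (S : ι → Set α) [∀ j, DecidablePred (· ∈ S j)] (k : ι → ℕ) {p t : ℝ} (hp0 : 0 ≤ p)
    (hp1 : p ≤ 1) (ht : 1 ≤ t) (hheavy : ∀ j ∈ J, k j * t ≤ p * #{x ∈ s | x ∈ S j})
    (hsum : exp ((1 - 2 * log 2) * (p * #s)) + ∑ j ∈ J, (t * exp (1 - t)) ^ k j < 1) :
    ∃ R ⊆ s, #R ≤ 2 * p * #s ∧ ∀ j ∈ J, k j ≤ #{x ∈ R | x ∈ S j} := by
  classical
  let E : Option ι → Finset α → Prop
    | none, R => 2 * p * #s < #R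
    | some j, R => #{x ∈ R | x ∈ S j} < k j
  obtain ⟨R, hR, hgood⟩ := exists_mem_forall_not_of_sum_lt_one (E := E) (J := J.insertNone)
    (fun R _ => bernoulliWeight_nonneg hp0 hp1 s R) (sum_bernoulliWeight p s) <| by
      rw [sum_insertNone]
      refine lt_of_le_of_lt (add_le_add ?_ (sum_le_sum fun j hj => ?_)) hsum
      · refine (sum_bernoulliWeight_two_mul_lt_card_le hp0 hp1 s).trans_eq' ?_
        exact sum_congr (by ext; simp [E]) fun _ _ => rfl
      · refine (sum_bernoulliWeight_card_filter_lt_le hp0 hp1 ht (hheavy j hj)).trans_eq' ?_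
        exact sum_congr (by ext; simp [E]) fun _ _ => rfl
  exact ⟨R, mem_powerset.1 hR, not_lt.1 (hgood none (by simp)),
    fun j hj => not_lt.1 (hgood (some j) (by simpa))⟩

end RandomSubset

lemma eight_le_logb_two {n : ℕ} (hn : 256 ≤ n) : 8 ≤ logb 2 n := by
  rw [le_logb_iff_rpow_le one_lt_two (by positivity), show (2 : ℝ) ^ (8 : ℝ) = 256 by norm_num]
  exact_mod_cast hn

lemma eight_mul_sq_mul_sq_logb_mul_exp_le_one {n : ℕ} (hn : 256 ≤ n) :
    8 * (n : ℝ) ^ 2 * (logb 2 n ^ 2 * exp (1 - logb 2 n ^ 2)) ≤ 1 := by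
  have hn_eq : exp (logb 2 n * log 2) = n := by
    rw [← log_div_log, div_mul_cancel₀ _ (log_pos one_lt_two).ne', exp_log (by positivity)]
  set L := logb 2 n
  have hL : 8 ≤ L := eight_le_logb_two hn
  have h8 : exp (3 * log 2) = 8 := by
    rw [← log_rpow two_pos, exp_log (by positivity)]
    norm_num
  calc 8 * (n : ℝ) ^ 2 * (L ^ 2 * exp (1 - L ^ 2))
      ≤ exp (3 * log 2) * exp (L * log 2) ^ 2 * (exp (L - 1) ^ 2 * exp (1 - L ^ 2)) := by
        rw [h8, hn_eq]
        gcongr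
        linarith [add_one_le_exp (L - 1)]
    _ = exp ((3 + 2 * L) * log 2 + 2 * L - 1 - L ^ 2) := by
        simp only [← exp_nat_mul, ← exp_add]
        ring_nf
    _ ≤ 1 := by
        rw [exp_le_one_iff]
        nlinarith [log_two_lt_d9]

lemma succ_mul_one_add_pow_sub_one_le {n : ℕ} {x : ℝ} (hx : 0 ≤ x) (hnx : 8 * n ^ 2 * x ≤ 1) :
    (n + 1) * ((1 + x) ^ n - 1) ≤ 1 / 2 := by
  rcases n.eq_zero_or_pos with rfl | hn
  · norm_num
  have hn1 : (1 : ℝ) ≤ n := by exact_mod_cast hn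
  have hsmall : |(n * x : ℝ)| ≤ 1 := by
    rw [abs_of_nonneg (by positivity)]
    nlinarith
  have hpow : (1 + x) ^ n - 1 ≤ 2 * (n * x) := by
    calc (1 + x) ^ n - 1 ≤ exp x ^ n - 1 := by
          gcongr
          linarith [add_one_le_exp x]
      _ ≤ 2 * (n * x) := by
          rw [← exp_nat_mul]
          have := (abs_le.1 (abs_exp_sub_one_le hsmall)).2
          rwa [abs_of_nonneg (by positivity)] at this
  nlinarith

lemma exp_one_sub_two_mul_log_two_mul_lt {y : ℝ} (hy : 2 ≤ y) :
    exp ((1 - 2 * log 2) * y) < 1 / 2 := by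
  calc exp ((1 - 2 * log 2) * y) < exp (-log 2) := exp_lt_exp.2 (by nlinarith [log_two_gt_d9])
    _ = 1 / 2 := by rw [exp_neg, exp_log two_pos, one_div]

lemma SimpleGraph.dist_lt_card {V : Type*} [Fintype V] (G : SimpleGraph V) (u v : V) :
    G.dist u v < Fintype.card V := by
  by_cases h : G.Reachable u v
  · obtain ⟨q, hq, hlen⟩ := h.exists_path_of_dist
    exact hlen ▸ hq.length_lt
  · rw [SimpleGraph.dist_eq_zero_of_not_reachable h]
    exact Fintype.card_pos_iff.2 ⟨u⟩

lemma graphBall_min_card {V : Type*} [Fintype V] (G : SimpleGraph V) (A : Set V) (i : ℕ) :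
    graphBall G A (min i (Fintype.card V)) = graphBall G A i := by
  ext v
  exact exists_congr fun a => and_congr_right fun _ =>
    ⟨fun h => h.trans (min_le_left _ _), fun h => le_min h (G.dist_lt_card a v).le⟩

lemma sum_powerset_erase_empty_pow_card {α : Type*} [DecidableEq α] (s : Finset α) (x : ℝ) :
    ∑ A ∈ s.powerset.erase ∅, x ^ #A = (1 + x) ^ #s - 1 := by
  rw [sum_erase_eq_sub (empty_mem_powerset s), add_comm, ← sum_pow_mul_eq_add_pow]
  simp

open Classical in
theorem exists_subset_hitting_heavy_balls {V : Type*} [Fintype V] (G : SimpleGraph V)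
    (s : Finset V) {p t : ℝ} (hp0 : 0 ≤ p) (hp1 : p ≤ 1) (ht : 1 ≤ t)
    (hsum : exp ((1 - 2 * log 2) * (p * #s)) +
      (Fintype.card V + 1) * ((1 + t * exp (1 - t)) ^ Fintype.card V - 1) < 1) :
    ∃ R ⊆ s, #R ≤ 2 * p * #s ∧ ∀ (A : Finset V) (i : ℕ),
      #A * t ≤ p * #{v ∈ s | v ∈ graphBall G A i} → #A ≤ #{v ∈ R | v ∈ graphBall G A i} := by
  set n := Fintype.card V
  set ballIndices := ((univ : Finset V).powerset.erase ∅) ×ˢ range (n + 1)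
  set heavy := {j ∈ ballIndices | #j.1 * t ≤ p * #{v ∈ s | v ∈ graphBall G j.1 j.2}}
  have hunion : ∑ j ∈ heavy, (t * exp (1 - t)) ^ #j.1 ≤ (n + 1) * ((1 + t * exp (1 - t)) ^ n - 1) :=
    calc ∑ j ∈ heavy, (t * exp (1 - t)) ^ #j.1
        ≤ ∑ j ∈ ballIndices, (t * exp (1 - t)) ^ #j.1 :=
          sum_le_sum_of_subset_of_nonneg (filter_subset _ _) fun _ _ _ => by positivity
      _ = (n + 1) * ((1 + t * exp (1 - t)) ^ n - 1) := by
          rw [sum_product_right]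
          simp only [sum_powerset_erase_empty_pow_card, card_univ, sum_const, card_range,
            nsmul_eq_mul]
          push_cast
          ring
  obtain ⟨R, hRs, hRcard, hR⟩ := exists_subset_card_le_forall_le_card_filter s heavy
    (fun j => graphBall G j.1 j.2) (fun j => #j.1) hp0 hp1 ht (fun j hj => (mem_filter.1 hj).2)
    (by linarith)
  refine ⟨R, hRs, hRcard, fun A i hA => ?_⟩
  obtain rfl | hne := eq_or_ne A ∅
  · simp
  rw [← graphBall_min_card] at hA ⊢
  refine hR (A, min i n) (mem_filter.2 ⟨mem_product.2 ⟨?_, ?_⟩, hA⟩)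
  · exact mem_erase.2 ⟨hne, mem_powerset.2 (subset_univ A)⟩
  · exact mem_range.2 (Nat.lt_succ_of_le (min_le_right _ _))

open Classical in
theorem exists_subset_hitting_heavy_balls_of_le_card {V : Type*} [Fintype V] (G : SimpleGraph V)
    (hV : 256 ≤ Fintype.card V) (s : Finset V) {p : ℝ} (hp0 : 0 ≤ p) (hp1 : p ≤ 1) :
    ∃ R ⊆ s, #R ≤ 2 * p * #s ∧ ∀ (A : Finset V) (i : ℕ),
      #A * logb 2 (Fintype.card V) ^ 2 ≤ p * #{v ∈ s | v ∈ graphBall G A i} →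
        #A ≤ #{v ∈ R | v ∈ graphBall G A i} := by
  have hL := eight_le_logb_two hV
  set t := logb 2 (Fintype.card V) ^ 2
  obtain hsmall | hlarge := lt_or_ge (p * #s) t
  · refine ⟨∅, empty_subset _, by simp; positivity, fun A i hA => ?_⟩
    have hAt : (#A : ℝ) * t < 1 * t :=
      calc (#A : ℝ) * t ≤ p * #{v ∈ s | v ∈ graphBall G A i} := hA
        _ ≤ p * #s := by gcongr; exact filter_subset _ _
        _ < 1 * t := by linarith
    have hA1 : (#A : ℝ) < 1 := lt_of_mul_lt_mul_right hAt (by positivity)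
    simp [Nat.lt_one_iff.1 (by exact_mod_cast hA1)]
  · refine exists_subset_hitting_heavy_balls G s hp0 hp1 (by nlinarith) ?_
    have hsize := exp_one_sub_two_mul_log_two_mul_lt (y := p * #s) (by nlinarith)
    have hballs := succ_mul_one_add_pow_sub_one_le (x := t * exp (1 - t)) (by positivity)
      (eight_mul_sq_mul_sq_logb_mul_exp_le_one hV)
    linarith

lemma ncard_inter_coe_eq_card_filter {α : Type*} (B : Set α) [DecidablePred (· ∈ B)]
    (F : Finset α) : (B ∩ F).ncard = #{v ∈ F | v ∈ B} := by
  rw [← Set.ncard_coe_finset, coe_filter, Set.inter_comm]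
  rfl

theorem exists_subset_hitting_balls_inside_general
    {V : Type} [Fintype V] (G : SimpleGraph V)
    (n : ℕ) (hn : Fintype.card V = n) (hn333 : 333 ≤ n)
    (I : Set V) (p : ℝ) (hp0 : 0 < p) (hp1 : p ≤ 1) :
    ∃ R : Set V, R ⊆ I ∧ (R.ncard : ℝ) ≤ 2 * I.ncard * p ∧
      ∀ (i : ℕ) (A : Set V),
        (A.ncard : ℝ) * (Real.logb 2 n) ^ 2 / p ≤ ((graphBall G A i ∩ I).ncard : ℝ) →
        (A.ncard : ℝ) ≤ ((graphBall G A i ∩ R).ncard : ℝ) := by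
  classical
  obtain ⟨R, hRs, hRcard, hR⟩ :=
    exists_subset_hitting_heavy_balls_of_le_card G (by omega) I.toFinset hp0.le hp1
  rw [← I.coe_toFinset, Set.ncard_coe_finset]
  refine ⟨R, by exact_mod_cast hRs, by rw [Set.ncard_coe_finset]; linarith, fun i A hA => ?_⟩
  have hRA := hR A.toFinset i
  rw [Set.coe_toFinset, ← Set.ncard_eq_toFinset_card', hn] at hRA
  rw [div_le_iff₀' hp0, ncard_inter_coe_eq_card_filter] at hA
  rw [ncard_inter_coe_eq_card_filter]
  exact_mod_cast hRA hA

/-- Corollary 2.3: Let `G` be a connected graph on `n ≥ 333` vertices, `ℐ ⊆ V(G)` a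
fixed set of vertices, and `0 < p ≤ 1`. There is a set `ℛ ⊆ ℐ` with `|ℛ| ≤ 2|ℐ|p`
such that for every `i : ℕ` and every `A ⊆ V(G)` with
`|B(A,i) ∩ ℐ| ≥ |A| (log₂ n)² / p`, we have `|B(A,i) ∩ ℛ| ≥ |A|`. -/
theorem exists_subset_hitting_balls_inside
    {V : Type} [Fintype V] (G : SimpleGraph V) (hG : G.Connected)
    (n : ℕ) (hn : Fintype.card V = n) (hn333 : 333 ≤ n)
    (I : Set V) (p : ℝ) (hp0 : 0 < p) (hp1 : p ≤ 1) :
    ∃ R : Set V, R ⊆ I ∧ (R.ncard : ℝ) ≤ 2 * I.ncard * p ∧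
      ∀ (i : ℕ) (A : Set V),
        (A.ncard : ℝ) * (Real.logb 2 n) ^ 2 / p ≤ ((graphBall G A i ∩ I).ncard : ℝ) →
        (A.ncard : ℝ) ≤ ((graphBall G A i ∩ R).ncard : ℝ) :=
  exists_subset_hitting_balls_inside_general G n hn hn333 I p hp0 hp1
end

section
/- Let D be a finite strongly connected digraph that either has diameter at most 2 or is bipartite with diameter at most 3. Then for every subdigraph H of D on m ≥ 1 vertices, c(D,H) ≤ √(2m). -/
/-!
Induction on `m = |S|` with `k = ⌊√(2m)⌋` cops. If a closed out-neighbourhood `N⁺[v]` contains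
more than `k` vertices of `S`, one cop waits at `v` and jumps onto the robber as soon as it enters
`N⁺[v]`, while the others play the inductive strategy on `S \ N⁺[v]`; as `2(m - k - 1) < k²`,
`k - 1` cops suffice there. Otherwise every `N⁺[a] ∩ S` has at most `k` vertices. In diameter 2
the cops see the robber's start `a` and occupy all of `N⁺[a] ∩ S` after two moves, which is where
the robber stands after its first move. In the bipartite case `k - 1` cops move in one step to
a vertex of the robber's colour and wait there; when the robber first moves, to `y` say, they occupy
`N⁺(y) ∩ S` (at most `k - 1` vertices, all at even distance, hence at distance at most 2), so they
catch the robber on its second move, and the last cop hunts down a robber that stops moving.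

Every cop walks along shortest paths towards a target that depends on the robber's moves so far.
-/


/-- `dirCopsCanWin D S H k` says that `k` cops have a winning strategy in the game of
Cops and Robbers in which the cops move along the arcs of a digraph with adjacency
relation `D` while the robber must start on a vertex of the subdigraph with vertex set
`S` and move only along its arcs `H`.  A cop strategy consists of initial positions
`init` together with a function `move` from full histories of the play (the list of
pairs (cop positions, robber position) at times `0, …, t`) to the cops' next
positions.  The robber is an arbitrary sequence `r : ℕ → V` starting in `S` in which
each step either stays put or follows an arc of `H`; the strategy is winning if along
every such play the cops' moves are legal (each cop stays put or follows an arc of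
`D`) and at some point, right after the cops' move, some cop stands on the robber's
current vertex. -/
def dirCopsCanWin {V : Type*} (D : V → V → Prop) (S : Set V) (H : V → V → Prop)
    (k : ℕ) : Prop :=
  ∃ (init : Fin k → V) (move : List ((Fin k → V) × V) → Fin k → V),
    ∀ r : ℕ → V,
      r 0 ∈ S →
      (∀ t, r (t + 1) = r t ∨ H (r t) (r (t + 1))) →
      ∀ c : ℕ → Fin k → V,
        c 0 = init →
        (∀ t, c (t + 1) = move (List.ofFn fun j : Fin (t + 1) => (c j.val, r j.val))) →
        (∀ t i, c (t + 1) i = c t i ∨ D (c t i) (c (t + 1) i)) ∧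
        ∃ t i, c (t + 1) i = r t

/-- `dirCopNumber D S H` is the cop number `c(D,H)` of the restricted game: the least
number of cops moving on `D` that can catch a robber confined to the subdigraph of
`D` with vertex set `S` and arc relation `H`. -/
noncomputable def dirCopNumber {V : Type*} (D : V → V → Prop) (S : Set V)
    (H : V → V → Prop) : ℕ :=
  sInf {k | dirCopsCanWin D S H k}

/-- A digraph with adjacency relation `D` is strongly connected if every vertex can
reach every other vertex by a directed path. -/
def dirStronglyConnected {V : Type*} (D : V → V → Prop) : Prop :=
  ∀ u v : V, Relation.ReflTransGen D u v

/-- A digraph has diameter at most 2 if for every ordered pair of vertices there is a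
directed path of length at most 2 from the first to the second. -/
def dirDiamLE2 {V : Type*} (D : V → V → Prop) : Prop :=
  ∀ u v : V, u = v ∨ D u v ∨ ∃ w, D u w ∧ D w v

/-- A digraph has diameter at most 3 if for every ordered pair of vertices there is a
directed path of length at most 3 from the first to the second. -/
def dirDiamLE3 {V : Type*} (D : V → V → Prop) : Prop :=
  ∀ u v : V, u = v ∨ D u v ∨ (∃ w, D u w ∧ D w v) ∨ ∃ w x, D u w ∧ D w x ∧ D x v

/-- A digraph is bipartite if its underlying graph is bipartite, i.e. its vertices can
be two-coloured so that every arc joins vertices of different colours. -/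
def dirBipartite {V : Type*} (D : V → V → Prop) : Prop :=
  ∃ f : V → Bool, ∀ u v : V, D u v → f u ≠ f v

theorem Bool.eq_of_ne_of_ne {a b c : Bool} (hab : a ≠ b) (hbc : b ≠ c) : a = c :=
  (Bool.eq_not_iff.2 hab).trans (Bool.eq_not_iff.2 hbc.symm).symm

namespace DirCops

variable {V : Type*}

section Pursuit

variable (D : V → V → Prop)

def LazyReach : ℕ → V → V → Prop
  | 0, p, x => p = x
  | n + 1, p, x => ∃ q, (q = p ∨ D p q) ∧ LazyReach n q x

variable {D}

lemma LazyReach.succ {n : ℕ} {p x : V} (h : LazyReach D n p x) : LazyReach D (n + 1) p x := by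
  induction n generalizing p with
  | zero => exact ⟨p, Or.inl rfl, h⟩
  | succ n ih =>
    obtain ⟨q, hpq, hq⟩ := h
    exact ⟨q, hpq, ih hq⟩

lemma LazyReach.mono {m n : ℕ} {p x : V} (h : LazyReach D m p x) (hmn : m ≤ n) :
    LazyReach D n p x := by
  induction hmn with
  | refl => exact h
  | step _ ih => exact ih.succ

lemma lazyReach_self (n : ℕ) (x : V) : LazyReach D n x x :=
  LazyReach.mono (m := 0) rfl n.zero_le

variable (D)

lemma exists_step_towards (p x : V) :
    ∃ q, (q = p ∨ D p q) ∧ ∀ n, LazyReach D (n + 1) p x → LazyReach D n q x := by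
  classical
  by_cases h : ∃ n, LazyReach D (n + 1) p x
  · obtain ⟨q, hpq, hq⟩ := Nat.find_spec h
    exact ⟨q, hpq, fun n hn => hq.mono (Nat.find_min' h hn)⟩
  · push Not at h
    exact ⟨p, Or.inl rfl, fun n hn => absurd hn (h n)⟩

noncomputable def towards (p x : V) : V :=
  (exists_step_towards D p x).choose

lemma towards_eq_or_adj (p x : V) : towards D p x = p ∨ D p (towards D p x) :=
  (exists_step_towards D p x).choose_spec.1

variable {D}

lemma LazyReach.towards {n : ℕ} {p x : V} (h : LazyReach D (n + 1) p x) :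
    LazyReach D n (towards D p x) x :=
  (exists_step_towards D p x).choose_spec.2 n h

variable (D)

noncomputable def pursuit (x₀ : V) (τ : ℕ → V) : ℕ → V
  | 0 => x₀
  | t + 1 => towards D (pursuit x₀ τ t) (τ t)

variable {D} {x₀ x : V} {τ : ℕ → V}

lemma pursuit_congr {τ' : ℕ → V} {t : ℕ} (h : ∀ s < t, τ s = τ' s) :
    pursuit D x₀ τ t = pursuit D x₀ τ' t := by
  induction t with
  | zero => rfl
  | succ t ih =>
    simp only [pursuit]
    rw [ih fun s hs => h s (by omega), h t (by omega)]

lemma pursuit_add_eq {t m : ℕ} (h : LazyReach D m (pursuit D x₀ τ t) x)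
    (hτ : ∀ s < m, τ (t + s) = x) : pursuit D x₀ τ (t + m) = x := by
  induction m generalizing t with
  | zero => exact h
  | succ m ih =>
    rw [show t + (m + 1) = t + 1 + m by omega]
    refine ih ?_ fun s hs => by rw [show t + 1 + s = t + (s + 1) by omega]; exact hτ _ (by omega)
    have hτt : τ t = x := hτ 0 (by omega)
    simp only [pursuit, hτt]
    exact h.towards

end Pursuit

structure TargetStrategy (V ι : Type*) where
  init : ι → V
  target : ι → ℕ → (ℕ → V) → V
  target_congr : ∀ i t r r', (∀ s ≤ t, r s = r' s) → target i t r = target i t r'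

namespace TargetStrategy

variable {ι κ : Type*} (D : V → V → Prop)

noncomputable def pos (σ : TargetStrategy V ι) (r : ℕ → V) (i : ι) : ℕ → V :=
  pursuit D (σ.init i) fun t => σ.target i t r

def Catches (σ : TargetStrategy V ι) (S : Set V) (H : V → V → Prop) : Prop :=
  ∀ r : ℕ → V, r 0 ∈ S → (∀ t, r (t + 1) = r t ∨ H (r t) (r (t + 1))) →
    ∃ t i, σ.pos D r i (t + 1) = r t

def sum (σ : TargetStrategy V ι) (σ' : TargetStrategy V κ) : TargetStrategy V (ι ⊕ κ) where
  init := Sum.elim σ.init σ'.init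
  target := Sum.elim σ.target σ'.target
  target_congr := by
    rintro (i | i)
    exacts [σ.target_congr i, σ'.target_congr i]

variable {D}

lemma pos_congr (σ : TargetStrategy V ι) {r r' : ℕ → V} (i : ι) {t : ℕ}
    (h : ∀ s < t, r s = r' s) : σ.pos D r i t = σ.pos D r' i t :=
  pursuit_congr fun s hs => σ.target_congr i s r r' fun u hu => h u (by omega)

lemma Catches.dirCopsCanWin [Fintype ι] {σ : TargetStrategy V ι} {S : Set V}
    {H : V → V → Prop} (hσ : σ.Catches D S H) : _root_.dirCopsCanWin D S H (Fintype.card ι) := by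
  let e := Fintype.equivFin ι
  refine ⟨fun j => σ.init (e.symm j), fun hist j => σ.pos D
    (fun s => (hist.map Prod.snd).getD s (σ.init (e.symm j))) (e.symm j) hist.length, ?_⟩
  intro r hr0 hr c hc0 hc
  have hpos : ∀ t j, c t j = σ.pos D r (e.symm j) t := by
    rintro (_ | t) j
    · rw [hc0]
      rfl
    · rw [hc t]
      dsimp only
      rw [List.length_ofFn, List.map_ofFn]
      refine σ.pos_congr _ fun s hs => ?_
      rw [List.getD_eq_getElem?_getD, List.getElem?_ofFn]
      simp [hs]
  refine ⟨fun t j => ?_, ?_⟩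
  · simp only [hpos]
    exact towards_eq_or_adj D _ _
  · obtain ⟨t, i, hi⟩ := hσ r hr0 hr
    exact ⟨t, e i, by rw [hpos, e.symm_apply_apply, hi]⟩

end TargetStrategy

open TargetStrategy

variable (D : V → V → Prop)

def CopsWin (S : Set V) (H : V → V → Prop) (k : ℕ) : Prop :=
  ∃ (ι : Type) (_ : Fintype ι) (σ : TargetStrategy V ι), Fintype.card ι ≤ k ∧ σ.Catches D S H

def closedNbhd (v : V) : Set V := {w | w = v ∨ D v w}

variable {D} {S : Set V} {H : V → V → Prop} {k : ℕ}

lemma CopsWin.mono {k' : ℕ} (h : CopsWin D S H k) (hk : k ≤ k') : CopsWin D S H k' := by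
  obtain ⟨ι, _, σ, hcard, hσ⟩ := h
  exact ⟨ι, inferInstance, σ, hcard.trans hk, hσ⟩

lemma CopsWin.dirCopNumber_le (h : CopsWin D S H k) : dirCopNumber D S H ≤ k := by
  obtain ⟨ι, _, σ, hcard, hσ⟩ := h
  exact (Nat.sInf_le hσ.dirCopsCanWin).trans hcard

lemma copsWin_empty (k : ℕ) : CopsWin D ∅ H k :=
  ⟨Empty, inferInstance, ⟨Empty.elim, fun i => i.elim, fun i => i.elim⟩, by simp,
    fun _ h _ => absurd h (Set.notMem_empty _)⟩

open Classical in
noncomputable def guard (v : V) (Z : Set V) : TargetStrategy V Unit where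
  init _ := v
  target _ t r := if r t ∈ Z then r t else v
  target_congr _ t r r' h := by rw [h t le_rfl]

lemma guard_catches {v : V} {r : ℕ → V} (hr : ∃ t, r t ∈ closedNbhd D v) :
    ∃ t, (guard v (closedNbhd D v)).pos D r () (t + 1) = r t := by
  classical
  refine ⟨Nat.find hr, ?_⟩
  have hwait : (guard v (closedNbhd D v)).pos D r () (0 + Nat.find hr) = v :=
    pursuit_add_eq (lazyReach_self _ v) fun s hs => by
      simp [guard, Nat.find_min hr (show s < Nat.find hr by omega)]
  rw [zero_add] at hwait
  have hjump : LazyReach D 1 ((guard v (closedNbhd D v)).pos D r () (Nat.find hr))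
      (r (Nat.find hr)) := by
    rw [hwait]
    exact ⟨_, Nat.find_spec hr, rfl⟩
  exact pursuit_add_eq hjump fun s hs => by
    obtain rfl : s = 0 := by omega
    simp [guard, Nat.find_spec hr]

lemma CopsWin.add_guard (v : V)
    (h : CopsWin D (S \ closedNbhd D v)
      (fun u w => H u w ∧ u ∉ closedNbhd D v ∧ w ∉ closedNbhd D v) k) :
    CopsWin D S H (k + 1) := by
  obtain ⟨ι, _, σ, hcard, hσ⟩ := h
  refine ⟨Unit ⊕ ι, inferInstance, (guard v (closedNbhd D v)).sum σ, by simp; omega, ?_⟩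
  intro r hr0 hr
  by_cases hZ : ∃ t, r t ∈ closedNbhd D v
  · obtain ⟨t, ht⟩ := guard_catches hZ
    exact ⟨t, .inl (), ht⟩
  · push Not at hZ
    obtain ⟨t, i, hi⟩ :=
      hσ r ⟨hr0, hZ 0⟩ fun t => (hr t).imp_right fun h => ⟨h, hZ t, hZ (t + 1)⟩
    exact ⟨t, .inr i, hi⟩

lemma exists_cover [Finite V] [Nonempty V] {T : Set V} {m : ℕ} (h : T.ncard ≤ m) :
    ∃ g : Fin m → V, T ⊆ Set.range g := by
  have := Fintype.ofFinite T
  obtain ⟨e⟩ := Function.Embedding.nonempty_of_card_le (α := T) (β := Fin m)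
    (by rwa [← Nat.card_eq_fintype_card, Nat.card_coe_set_eq, Fintype.card_fin])
  exact ⟨Function.extend e Subtype.val fun _ => Classical.arbitrary V,
    fun w hw => ⟨e ⟨w, hw⟩, e.injective.extend_apply _ _ _⟩⟩

lemma mem_inter_closedNbhd_of_step (hsub : ∀ u w, H u w → D u w ∧ w ∈ S) {u w : V} (hu : u ∈ S)
    (h : w = u ∨ H u w) : w ∈ S ∩ closedNbhd D u := by
  rcases h with rfl | h
  · exact ⟨hu, Or.inl rfl⟩
  · exact ⟨(hsub u w h).2, Or.inr (hsub u w h).1⟩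

lemma lazyReach_two_of_dirDiamLE2 (hd : dirDiamLE2 D) (u w : V) : LazyReach D 2 u w := by
  rcases hd u w with rfl | huw | ⟨p, hup, hpw⟩
  · exact lazyReach_self 2 u
  · exact ⟨u, Or.inl rfl, w, Or.inr huw, rfl⟩
  · exact ⟨p, Or.inr hup, w, Or.inr hpw, rfl⟩

lemma lazyReach_three_of_dirDiamLE3 (hd : dirDiamLE3 D) (u w : V) : LazyReach D 3 u w := by
  rcases hd u w with rfl | huw | ⟨p, hup, hpw⟩ | ⟨p, q, hup, hpq, hqw⟩
  · exact lazyReach_self 3 u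
  · exact ⟨u, Or.inl rfl, u, Or.inl rfl, w, Or.inr huw, rfl⟩
  · exact ⟨p, Or.inr hup, p, Or.inl rfl, w, Or.inr hpw, rfl⟩
  · exact ⟨p, Or.inr hup, q, Or.inr hpq, w, Or.inr hqw, rfl⟩

lemma copsWin_of_dirDiamLE2 [Finite V] (hd : dirDiamLE2 D)
    (hsub : ∀ u w, H u w → D u w ∧ w ∈ S) (hlight : ∀ a, (S ∩ closedNbhd D a).ncard ≤ k)
    (x₀ : V) : CopsWin D S H k := by
  have : Nonempty V := ⟨x₀⟩
  choose g hg using fun a => exists_cover (hlight a)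
  let σ : TargetStrategy V (Fin k) :=
    ⟨fun _ => x₀, fun i _ r => g (r 0) i, fun i t r r' h => by rw [h 0 t.zero_le]⟩
  refine ⟨Fin k, inferInstance, σ, by simp, fun r hr0 hr => ?_⟩
  obtain ⟨i, hi⟩ := hg (r 0) (mem_inter_closedNbhd_of_step hsub hr0 (hr 0))
  refine ⟨1, i, ?_⟩
  exact (pursuit_add_eq (t := 0) (lazyReach_two_of_dirDiamLE2 hd _ _) fun _ _ => rfl).trans hi

lemma exists_first_move {r : ℕ → V} {T : ℕ} (h : ∃ s, T ≤ s ∧ r s ≠ r T) :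
    ∃ e, T ≤ e ∧ r (e + 1) ≠ r T ∧ ∀ s, T ≤ s → s ≤ e → r s = r T := by
  classical
  obtain ⟨hT, hne⟩ := Nat.find_spec h
  have hlt : T < Nat.find h := by
    by_contra hle
    exact hne (by rw [show Nat.find h = T by omega])
  refine ⟨Nat.find h - 1, by omega, by rwa [Nat.sub_add_cancel (by omega)], fun s hs he => ?_⟩
  by_contra hs'
  exact Nat.find_min h (by omega) ⟨hs, hs'⟩

lemma robber_mem (hsub : ∀ u w, H u w → w ∈ S) {r : ℕ → V} (hr0 : r 0 ∈ S)
    (hr : ∀ t, r (t + 1) = r t ∨ H (r t) (r (t + 1))) (t : ℕ) : r t ∈ S := by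
  induction t with
  | zero => exact hr0
  | succ t ih =>
    rcases hr t with h | h
    · rwa [h]
    · exact hsub _ _ h

open Classical in
noncomputable def firstMove (r : ℕ → V) : ℕ → Option V
  | 0 => none
  | t + 1 => (firstMove r t).or (if r (t + 1) = r 0 then none else some (r (t + 1)))

lemma firstMove_eq_none {r : ℕ → V} {t : ℕ} (h : ∀ s ≤ t, r s = r 0) : firstMove r t = none := by
  induction t with
  | zero => rfl
  | succ t ih => simp [firstMove, ih fun s hs => h s (by omega), h (t + 1) le_rfl]

lemma firstMove_eq_some {r : ℕ → V} {d t : ℕ} (h : ∀ s ≤ d, r s = r 0) (hd : r (d + 1) ≠ r 0)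
    (ht : d < t) : firstMove r t = some (r (d + 1)) := by
  induction t, ht using Nat.le_induction with
  | base => simp [firstMove, firstMove_eq_none h, hd]
  | succ t _ ih => simp [firstMove, ih]

lemma firstMove_congr {r r' : ℕ → V} {t : ℕ} (h : ∀ s ≤ t, r s = r' s) :
    firstMove r t = firstMove r' t := by
  induction t with
  | zero => rfl
  | succ t ih =>
    simp only [firstMove]
    rw [ih fun s hs => h s (by omega), h (t + 1) le_rfl, h 0 (by omega)]

def chaser (x₀ : V) : TargetStrategy V Unit where
  init _ := x₀
  target _ t r := r t
  target_congr _ t _ _ h := h t le_rfl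

lemma chaser_catches {m : ℕ} (hD : ∀ p x, LazyReach D m p x) (x₀ : V) {r : ℕ → V} {T : ℕ}
    (hT : ∀ s, T ≤ s → r s = r T) : ∃ t, (chaser x₀).pos D r () (t + 1) = r t := by
  refine ⟨T + m, ?_⟩
  rw [hT (T + m) (by omega)]
  exact pursuit_add_eq (t := T) (m := m + 1) (hD _ _).succ fun s _ => hT (T + s) (by omega)

noncomputable def squad {ι : Type*} (x₀ : V) (base : V → V) (cover : V → ι → V) :
    TargetStrategy V ι where
  init _ := x₀
  target i t r := (firstMove r t).elim (base (r 0)) fun y => cover y i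
  target_congr i t r r' h := by rw [firstMove_congr h, h 0 t.zero_le]

lemma squad_pos_eq {ι : Type*} {x₀ : V} {base : V → V} {cover : V → ι → V} {r : ℕ → V}
    {d e : ℕ} {i : ι} (hbase : LazyReach D 1 x₀ (base (r 0)))
    (hcover : LazyReach D 2 (base (r 0)) (cover (r (d + 1)) i))
    (hstill : ∀ s ≤ d, r s = r 0) (hmove : r (d + 1) ≠ r 0) (hde : d < e) :
    (squad x₀ base cover).pos D r i (e + 2) = cover (r (d + 1)) i := by
  have hwait : (squad x₀ base cover).pos D r i (0 + (d + 1)) = base (r 0) :=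
    pursuit_add_eq (hbase.mono (by omega)) fun s hs => by
      have : firstMove r s = none := firstMove_eq_none fun u hu => hstill u (by omega)
      simp [squad, this]
  rw [zero_add] at hwait
  have hstart : LazyReach D (e + 1 - d) ((squad x₀ base cover).pos D r i (d + 1))
      (cover (r (d + 1)) i) := by
    rw [hwait]
    exact hcover.mono (by omega)
  have hgo := pursuit_add_eq hstart fun s _ => by
    simp [squad, firstMove_eq_some hstill hmove (show d < d + 1 + s by omega)]
  rwa [show d + 1 + (e + 1 - d) = e + 2 by omega] at hgo

section Bipartite

variable {f : V → Bool} (hf : ∀ u v, D u v → f u ≠ f v)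
include hf

lemma lazyReach_two_of_colour_eq (hd : dirDiamLE3 D) {u w : V} (h : f u = f w) :
    LazyReach D 2 u w := by
  rcases hd u w with rfl | huw | ⟨p, hup, hpw⟩ | ⟨p, q, hup, hpq, hqw⟩
  · exact lazyReach_self 2 u
  · exact absurd h (hf u w huw)
  · exact ⟨p, Or.inr hup, w, Or.inr hpw, rfl⟩
  · exact absurd ((Bool.eq_of_ne_of_ne (hf u p hup) (hf p q hpq)).symm.trans h) (hf q w hqw)

lemma exists_base (hd : dirDiamLE3 D) (x₀ a : V) : ∃ b, LazyReach D 1 x₀ b ∧ f b = f a := by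
  by_cases h : f x₀ = f a
  · exact ⟨x₀, lazyReach_self 1 x₀, h⟩
  obtain ⟨p, hp⟩ : ∃ p, D x₀ p := by
    rcases hd x₀ a with rfl | hp | ⟨p, hp, -⟩ | ⟨p, -, hp, -, -⟩
    exacts [absurd rfl h, ⟨a, hp⟩, ⟨p, hp⟩, ⟨p, hp⟩]
  exact ⟨p, ⟨p, Or.inr hp, rfl⟩, Bool.eq_of_ne_of_ne (hf x₀ p hp).symm h⟩

lemma ncard_inter_adj_add_one [Finite V] {S : Set V} {a : V} (ha : a ∈ S) :
    (S ∩ {w | D a w}).ncard + 1 = (S ∩ closedNbhd D a).ncard := by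
  have : S ∩ closedNbhd D a = insert a (S ∩ {w | D a w}) := by
    ext w
    simp only [closedNbhd, Set.mem_inter_iff, Set.mem_insert_iff, Set.mem_ofPred_eq]
    grind
  rw [this, Set.ncard_insert_of_notMem fun h => hf a a h.2 rfl]

lemma copsWin_of_bipartite [Finite V] (hd : dirDiamLE3 D)
    (hsub : ∀ u w, H u w → D u w ∧ w ∈ S) (hlight : ∀ a, (S ∩ closedNbhd D a).ncard ≤ k)
    (x₀ : V) (hk : 1 ≤ k) : CopsWin D S H k := by
  have : Nonempty V := ⟨x₀⟩
  choose base hbase using exists_base hf hd x₀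
  choose! cover hcover using fun a (ha : a ∈ S) =>
    exists_cover (m := k - 1) (T := S ∩ {w | D a w})
      (by have := ncard_inter_adj_add_one hf ha; have := hlight a; omega)
  refine ⟨Unit ⊕ Fin (k - 1), inferInstance, (chaser x₀).sum (squad x₀ base cover),
    by simp; omega, fun r hr0 hr => ?_⟩
  have hmem := robber_mem (fun u w h => (hsub u w h).2) hr0 hr
  have harc : ∀ t, r (t + 1) ≠ r t → D (r t) (r (t + 1)) := fun t hne =>
    (hsub _ _ ((hr t).resolve_left hne)).1
  by_cases hstop : ∃ T, ∀ s, T ≤ s → r s = r T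
  · obtain ⟨T, hT⟩ := hstop
    obtain ⟨t, ht⟩ := chaser_catches (lazyReach_three_of_dirDiamLE3 hd) x₀ hT
    exact ⟨t, .inl (), ht⟩
  push Not at hstop
  obtain ⟨d, -, hd₁, hstill⟩ := exists_first_move (hstop 0)
  obtain ⟨e, hde, he₁, hstill'⟩ := exists_first_move (hstop (d + 1))
  have hd₀ : r d = r 0 := hstill d d.zero_le le_rfl
  have he₀ : r e = r (d + 1) := hstill' e hde le_rfl
  have hdD : D (r 0) (r (d + 1)) := by simpa only [hd₀] using harc d (by rwa [hd₀])
  have heD : D (r (d + 1)) (r (e + 1)) := by simpa only [he₀] using harc e (by rwa [he₀])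
  obtain ⟨i, hi⟩ := hcover _ (hmem (d + 1)) ⟨hmem (e + 1), heD⟩
  have hcolour : f (base (r 0)) = f (cover (r (d + 1)) i) := by
    rw [(hbase (r 0)).2, hi]
    exact Bool.eq_of_ne_of_ne (hf _ _ hdD) (hf _ _ heD)
  refine ⟨e + 1, .inr i, ?_⟩
  exact (squad_pos_eq (hbase (r 0)).1 (lazyReach_two_of_colour_eq hf hd hcolour)
    (fun s hs => hstill s s.zero_le hs) hd₁ (by omega)).trans hi

end Bipartite

lemma sqrt_two_mul_lt {m n : ℕ} (h : m + Nat.sqrt (2 * n) < n) :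
    Nat.sqrt (2 * m) < Nat.sqrt (2 * n) := by
  have := Nat.lt_succ_sqrt' (2 * n)
  rw [Nat.sqrt_lt', Nat.succ_eq_add_one] at *
  nlinarith

theorem copsWin_sqrt_two_mul_ncard [Finite V]
    (hdiam : dirDiamLE2 D ∨ (dirBipartite D ∧ dirDiamLE3 D)) (S : Set V) (H : V → V → Prop)
    (hsub : ∀ u w, H u w → D u w ∧ u ∈ S ∧ w ∈ S) : CopsWin D S H (Nat.sqrt (2 * S.ncard)) := by
  induction hn : S.ncard using Nat.strong_induction_on generalizing S H with
  | _ n ih =>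
  obtain rfl | ⟨x₀, hx₀⟩ := S.eq_empty_or_nonempty
  · exact copsWin_empty _
  by_cases heavy : ∃ v, Nat.sqrt (2 * n) < (S ∩ closedNbhd D v).ncard
  · obtain ⟨v, hv⟩ := heavy
    have hsplit := Set.ncard_inter_add_ncard_sdiff_eq_ncard S (closedNbhd D v)
    refine (CopsWin.add_guard v (ih _ (by omega) _ _ ?_ rfl)).mono (sqrt_two_mul_lt (by omega))
    exact fun u w h => ⟨(hsub u w h.1).1, ⟨(hsub u w h.1).2.1, h.2.1⟩, (hsub u w h.1).2.2, h.2.2⟩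
  push Not at heavy
  have hsub' : ∀ u w, H u w → D u w ∧ w ∈ S := fun u w h => ⟨(hsub u w h).1, (hsub u w h).2.2⟩
  rcases hdiam with hd | ⟨⟨f, hf⟩, hd⟩
  · exact copsWin_of_dirDiamLE2 hd hsub' heavy x₀
  · have hn : 0 < n := hn ▸ (Set.ncard_pos).2 ⟨x₀, hx₀⟩
    exact copsWin_of_bipartite hf hd hsub' heavy x₀ (Nat.sqrt_pos.2 (by omega))

end DirCops

theorem dirCopNumber_sub_le_sqrt_general
    {V : Type} [Fintype V] (D : V → V → Prop)
    (hdiam : dirDiamLE2 D ∨ (dirBipartite D ∧ dirDiamLE3 D))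
    (S : Set V) (H : V → V → Prop)
    (hsub : ∀ u v : V, H u v → D u v ∧ u ∈ S ∧ v ∈ S) :
    (dirCopNumber D S H : ℝ) ≤ Real.sqrt (2 * S.ncard) := by
  have hle := (DirCops.copsWin_sqrt_two_mul_ncard hdiam S H hsub).dirCopNumber_le
  calc (dirCopNumber D S H : ℝ) ≤ Nat.sqrt (2 * S.ncard) := by exact_mod_cast hle
    _ ≤ Real.sqrt (2 * S.ncard) := by exact_mod_cast Real.nat_sqrt_le_real_sqrt

/-- The inductive statement in the proof of Theorem 7.2: for every subdigraph `H`
(with vertex set `S` of size `m ≥ 1` and arc relation `H`) of a strongly connected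
digraph `D` which has diameter at most 2 or is bipartite of diameter at most 3, we
have `c(D,H) ≤ √(2m)`. -/
theorem dirCopNumber_sub_le_sqrt
    {V : Type} [Fintype V] (D : V → V → Prop)
    (hconn : dirStronglyConnected D)
    (hdiam : dirDiamLE2 D ∨ (dirBipartite D ∧ dirDiamLE3 D))
    (S : Set V) (H : V → V → Prop)
    (hsub : ∀ u v : V, H u v → D u v ∧ u ∈ S ∧ v ∈ S)
    (hm : 1 ≤ S.ncard) :
    (dirCopNumber D S H : ℝ) ≤ Real.sqrt (2 * S.ncard) :=
  dirCopNumber_sub_le_sqrt_general D hdiam S H hsub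
end
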